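/- Let m > 0 and let f : ℂ × ℂ → ℂ be an entire function of two variables. For h ∈ (0,1), define the deformed wave operator □_h f = e^{−r} D_r((1 + e^{·}) D_r f) − (e^{−r}+1) D_t² f, where D_r g(r,t) = (g(r+πih, t) − g(r−πih, t))/(2i sin(πh)) and D_t g(r,t) = (g(r, t+πih) − g(r, t−πih))/(2i sin(πh)). Then for every (r,t) ∈ ℝ², lim_{h→0⁺} (□_h f)(r,t) = (□ f)(r,t), where □ f = e^{−r} ∂_r((1+e^r) ∂_r f) − (e^{−r}+1) ∂_t² f is the classical wave operator; i.e. the classical wave operator is recovered in the limit h → 0. -/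

import Mathlib

/-!
Put `x = π h i`. Since `2 i sin (π h) = 2 x sinc (π h)`, the deformed operator is exactly the
classical one with every derivative replaced by the symmetric difference quotient
`δₓ g z = (g (z + x) - g (z - x)) / (2 x)`, divided by `sinc (π h) ^ 2 → 1`. For the nested
quotient, `δ_ε g (a ± ε) = dslope g a (a ± 2 ε)` turns `δ_ε (p · δ_ε g) a` into the symmetric
quotient at `0` of the single function `η ↦ p (a + η) · dslope g a (a + 2 η)`, whose derivative
at `0` is `(p g')' a` because `(dslope g a)' a = g'' a / 2`.
-/

open Real Complex

/-- The finite-difference derivative in the first variable,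
`D_r f (z,w) = (f(z+πih,w) − f(z−πih,w))/(2i sin(πh))`. -/
noncomputable def defDr (h : ℝ) (f : ℂ × ℂ → ℂ) (z w : ℂ) : ℂ :=
  (f (z + (π : ℂ) * (h : ℂ) * Complex.I, w) - f (z - (π : ℂ) * (h : ℂ) * Complex.I, w)) /
    (2 * Complex.I * ((Real.sin (π * h) : ℝ) : ℂ))

/-- The deformed wave operator
`□_h f = e^{−r} D_r((1+e^·) D_r f) − (e^{−r}+1) D_t² f` evaluated at real `(r,t)`. -/
noncomputable def defBox (h : ℝ) (f : ℂ × ℂ → ℂ) (r t : ℝ) : ℂ :=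
  (Real.exp (-r) : ℂ) *
      (((1 + Complex.exp ((r : ℂ) + (π : ℂ) * (h : ℂ) * Complex.I)) *
            defDr h f ((r : ℂ) + (π : ℂ) * (h : ℂ) * Complex.I) (t : ℂ)
          - (1 + Complex.exp ((r : ℂ) - (π : ℂ) * (h : ℂ) * Complex.I)) *
              defDr h f ((r : ℂ) - (π : ℂ) * (h : ℂ) * Complex.I) (t : ℂ)) /
        (2 * Complex.I * ((Real.sin (π * h) : ℝ) : ℂ)))
    - ((Real.exp (-r) + 1 : ℝ) : ℂ) *
        ((f ((r : ℂ), (t : ℂ) + 2 * (π : ℂ) * (h : ℂ) * Complex.I)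
            - 2 * f ((r : ℂ), (t : ℂ))
            + f ((r : ℂ), (t : ℂ) - 2 * (π : ℂ) * (h : ℂ) * Complex.I)) /
          (-(4 * ((Real.sin (π * h) : ℝ) : ℂ) ^ 2)))

/-- The classical wave operator `□ f = e^{−r} ∂_r((1+e^r)∂_r f) − (e^{−r}+1) ∂_t² f`
evaluated at real `(r,t)` (partial derivatives in the complex sense). -/
noncomputable def classBox (f : ℂ × ℂ → ℂ) (r t : ℝ) : ℂ :=
  (Real.exp (-r) : ℂ) *
      deriv (fun z : ℂ => (1 + Complex.exp z) * deriv (fun y : ℂ => f (y, (t : ℂ))) z) (r : ℂ)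
    - ((Real.exp (-r) + 1 : ℝ) : ℂ) *
        deriv (deriv (fun w : ℂ => f ((r : ℂ), w))) (t : ℂ)

open Filter Topology

section SymmDiffQuot

variable {𝕜 : Type*} [NontriviallyNormedField 𝕜]

def symmDiffQuot (ε : 𝕜) (g : 𝕜 → 𝕜) (z : 𝕜) : 𝕜 :=
  (g (z + ε) - g (z - ε)) / (2 * ε)

lemma symmDiffQuot_neg (ε : 𝕜) (g : 𝕜 → 𝕜) (z : 𝕜) :
    symmDiffQuot (-ε) g z = symmDiffQuot ε g z := by
  rw [symmDiffQuot, symmDiffQuot, sub_neg_eq_add, ← sub_eq_add_neg, mul_neg, div_neg,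
    ← neg_div, neg_sub]

lemma symmDiffQuot_add_self [CharZero 𝕜] {ε : 𝕜} (hε : ε ≠ 0) (g : 𝕜 → 𝕜) (a : 𝕜) :
    symmDiffQuot ε g (a + ε) = dslope g a (a + 2 * ε) := by
  have h2 : (2 : 𝕜) * ε ≠ 0 := mul_ne_zero two_ne_zero hε
  rw [dslope_of_ne _ (by simpa using h2), slope_def_field, symmDiffQuot, add_sub_cancel_right,
    add_sub_cancel_left, add_assoc, ← two_mul]

lemma HasDerivAt.tendsto_symmDiffQuot [CharZero 𝕜] {P : 𝕜 → 𝕜} {d a : 𝕜}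
    (hP : HasDerivAt P d a) :
    Tendsto (fun ε => symmDiffQuot ε P a) (𝓝[≠] 0) (𝓝 d) := by
  have hQ : HasDerivAt (fun ε => P (a + ε) - P (a - ε)) (d - -d) 0 :=
    (HasDerivAt.comp_const_add a 0 (by rwa [add_zero])).sub
      (HasDerivAt.comp_const_sub a 0 (by rwa [sub_zero]))
  have := hQ.tendsto_slope_zero.div_const 2
  rw [sub_neg_eq_add, add_self_div_two] at this
  refine this.congr fun ε => ?_
  simp only [zero_add, add_zero, sub_zero, sub_self, smul_eq_mul, symmDiffQuot]
  ring

lemma AnalyticAt.hasDerivAt_dslope [CompleteSpace 𝕜] [CharZero 𝕜] {g : 𝕜 → 𝕜} {a : 𝕜}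
    (hg : AnalyticAt 𝕜 g a) : HasDerivAt (dslope g a) (deriv (deriv g) a / 2) a := by
  -- `dslope g a` has power series `p.fslope`, with linear coefficient `p.coeff 2 = g'' a / 2!`
  obtain ⟨p, hp⟩ := hg
  refine hp.has_fpower_series_dslope_fslope.hasDerivAt.congr_deriv ?_
  obtain ⟨R, hR⟩ := hp
  have key := hR.factorial_smul (1 : 𝕜) 2
  rw [← iteratedDeriv_eq_iteratedFDeriv, iteratedDeriv_succ, iteratedDeriv_one] at key
  change p.fslope.coeff 1 = _
  rw [FormalMultilinearSeries.coeff_fslope, ← key]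
  simp [Nat.factorial]

lemma tendsto_symmDiffQuot_mul_symmDiffQuot [CompleteSpace 𝕜] [CharZero 𝕜] {p g : 𝕜 → 𝕜}
    {a : 𝕜} (hp : DifferentiableAt 𝕜 p a) (hg : AnalyticAt 𝕜 g a) :
    Tendsto (fun ε => symmDiffQuot ε (fun z => p z * symmDiffQuot ε g z) a) (𝓝[≠] 0)
      (𝓝 (deriv (fun z => p z * deriv g z) a)) := by
  set P := fun η => p (a + η) * dslope g a (a + 2 * η)
  have hP : HasDerivAt P (deriv (fun z => p z * deriv g z) a) 0 := by
    have hp' : HasDerivAt (fun η => p (a + η)) (deriv p a) 0 :=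
      HasDerivAt.comp_const_add a 0 (by rw [add_zero]; exact hp.hasDerivAt)
    have hD : HasDerivAt (fun η => dslope g a (a + 2 * η)) (deriv (deriv g) a / 2 * 2) 0 := by
      have hlin : HasDerivAt (fun η => a + 2 * η) 2 0 := by
        simpa using ((hasDerivAt_id (0 : 𝕜)).const_mul 2).const_add a
      exact HasDerivAt.comp 0 (by rw [mul_zero, add_zero]; exact hg.hasDerivAt_dslope) hlin
    have hpg : HasDerivAt (fun z => p z * deriv g z)
        (deriv p a * deriv g a + p a * deriv (deriv g) a) a :=
      hp.hasDerivAt.mul hg.deriv.differentiableAt.hasDerivAt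
    rw [hpg.deriv]
    refine (hp'.mul hD).congr_deriv ?_
    simp only [add_zero, mul_zero, dslope_same]
    ring
  refine hP.tendsto_symmDiffQuot.congr' ?_
  filter_upwards [self_mem_nhdsWithin] with ε (hε : ε ≠ 0)
  have hminus : symmDiffQuot ε g (a - ε) = dslope g a (a + 2 * -ε) := by
    rw [← symmDiffQuot_neg, sub_eq_add_neg, symmDiffQuot_add_self (neg_ne_zero.2 hε)]
  rw [symmDiffQuot, symmDiffQuot, zero_add, zero_sub, symmDiffQuot_add_self hε, hminus,
    sub_eq_add_neg a]

lemma tendsto_symmDiffQuot_symmDiffQuot [CompleteSpace 𝕜] [CharZero 𝕜] {g : 𝕜 → 𝕜} {a : 𝕜}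
    (hg : AnalyticAt 𝕜 g a) :
    Tendsto (fun ε => symmDiffQuot ε (symmDiffQuot ε g) a) (𝓝[≠] 0)
      (𝓝 (deriv (deriv g) a)) := by
  simpa using tendsto_symmDiffQuot_mul_symmDiffQuot (differentiableAt_const (1 : 𝕜)) hg

end SymmDiffQuot

lemma Real.sin_eq_mul_sinc (x : ℝ) : Real.sin x = x * sinc x := by
  rcases eq_or_ne x 0 with rfl | hx
  · simp
  · rw [sinc_of_ne_zero hx, mul_div_cancel₀ _ hx]

lemma defDr_eq_symmDiffQuot (h : ℝ) (f : ℂ × ℂ → ℂ) (z w : ℂ) :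
    defDr h f z w = symmDiffQuot (π * h * I) (fun y => f (y, w)) z / sinc (π * h) := by
  rw [defDr, symmDiffQuot, div_div, Real.sin_eq_mul_sinc]
  push_cast
  ring_nf

lemma defBox_eq_symmDiffQuot (h : ℝ) (f : ℂ × ℂ → ℂ) (r t : ℝ) :
    defBox h f r t =
      rexp (-r) * (symmDiffQuot (π * h * I)
          (fun z => (1 + cexp z) * symmDiffQuot (π * h * I) (fun y => f (y, t)) z) r /
            sinc (π * h) ^ 2)
        - (rexp (-r) + 1 : ℝ) * (symmDiffQuot (π * h * I)
            (symmDiffQuot (π * h * I) (fun w => f (r, w))) t / sinc (π * h) ^ 2) := by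
  have hsin : ((Real.sin (π * h) : ℝ) : ℂ) = -I * (π * h * I) * sinc (π * h) := by
    rw [Real.sin_eq_mul_sinc]
    push_cast
    linear_combination (π * h * sinc (π * h) : ℂ) * I_mul_I
  simp only [defBox, defDr_eq_symmDiffQuot, symmDiffQuot, hsin]
  rw [show (t : ℂ) + π * h * I + π * h * I = t + 2 * π * h * I by ring,
    show (t : ℂ) + π * h * I - π * h * I = t by ring,
    show (t : ℂ) - π * h * I + π * h * I = t by ring,
    show (t : ℂ) - π * h * I - π * h * I = t - 2 * π * h * I by ring]
  -- for `h = 0` or `sinc (π h) = 0` both sides vanish by division by zero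
  rcases eq_or_ne h 0 with rfl | hh
  · simp
  rcases eq_or_ne (sinc (π * h)) 0 with hs | hs
  · simp [hs]
  field_simp
  ring_nf
  rw [I_sq]
  ring

lemma tendsto_pi_mul_I_nhdsGT_nhdsNE :
    Tendsto (fun h : ℝ => (π * h * I : ℂ)) (𝓝[>] 0) (𝓝[≠] 0) := by
  refine tendsto_nhdsWithin_iff.2 ⟨?_, ?_⟩
  · exact tendsto_nhdsWithin_of_tendsto_nhds ((by fun_prop : Continuous fun h : ℝ =>
      (π * h * I : ℂ)).tendsto' 0 0 (by simp))
  · filter_upwards [self_mem_nhdsWithin] with h (hh : 0 < h)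
    simp [hh.ne', Real.pi_ne_zero]

lemma tendsto_sinc_pi_mul_sq :
    Tendsto (fun h : ℝ => ((sinc (π * h) : ℝ) : ℂ) ^ 2) (𝓝[>] 0) (𝓝 1) :=
  tendsto_nhdsWithin_of_tendsto_nhds ((by fun_prop : Continuous fun h : ℝ =>
    ((sinc (π * h) : ℝ) : ℂ) ^ 2).tendsto' 0 1 (by simp))

/-- for an entire function `f` of two variables the deformed wave operator
recovers the classical one in the limit `h → 0⁺`. -/
theorem defBox_tendsto_classBox (f : ℂ × ℂ → ℂ) (hf : Differentiable ℂ f) :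
    ∀ r t : ℝ,
      Filter.Tendsto (fun h : ℝ => defBox h f r t) (nhdsWithin 0 (Set.Ioi 0))
        (nhds (classBox f r t)) := by
  intro r t
  have hF : AnalyticAt ℂ (fun y => f (y, t)) r :=
    (hf.comp (differentiable_id.prodMk (differentiable_const _))).analyticAt _
  have hG : AnalyticAt ℂ (fun w => f (r, w)) t :=
    (hf.comp ((differentiable_const _).prodMk differentiable_id)).analyticAt _
  have hr := ((tendsto_symmDiffQuot_mul_symmDiffQuot (p := fun z => 1 + cexp z) (by fun_prop)
    hF).comp tendsto_pi_mul_I_nhdsGT_nhdsNE).div tendsto_sinc_pi_mul_sq one_ne_zero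
  have ht := ((tendsto_symmDiffQuot_symmDiffQuot hG).comp
    tendsto_pi_mul_I_nhdsGT_nhdsNE).div tendsto_sinc_pi_mul_sq one_ne_zero
  rw [div_one] at hr ht
  simp_rw [defBox_eq_symmDiffQuot]
  exact (hr.const_mul _).sub (ht.const_mul _)
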